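/- Let Z be a Zinbiel algebra, M an ideal of Z of codimension one with Z = M + Fz, and A ⊆ M an abelian subalgebra with M = A + F[a,z] for some a ∈ A, where [z,A] ⊆ A and [A,z] ⊄ A. Then M is abelian. -/
import Mathlib


variable {F : Type*} [Field F] {Z : Type*} [AddCommGroup Z] [Module F Z]

/-- `A` is a subalgebra of the algebra with multiplication `b`. -/
def IsSubalg (b : Z →ₗ[F] Z →ₗ[F] Z) (A : Submodule F Z) : Prop :=
  ∀ x ∈ A, ∀ y ∈ A, b x y ∈ A

/-- `A` is abelian: all products of elements of `A` vanish. -/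
def IsAbelian (b : Z →ₗ[F] Z →ₗ[F] Z) (A : Submodule F Z) : Prop :=
  ∀ x ∈ A, ∀ y ∈ A, b x y = 0

/-- `A` is a two-sided ideal. -/
def IsIdeal (b : Z →ₗ[F] Z →ₗ[F] Z) (A : Submodule F Z) : Prop :=
  ∀ z : Z, ∀ x ∈ A, b z x ∈ A ∧ b x z ∈ A

/-- let `Z` be a Zinbiel algebra, `M` an ideal of codimension one with
`Z = M + Fz`, and `A ⊆ M` an abelian subalgebra with `M = A + F[a,z]` for some `a ∈ A`,
where `[z,A] ⊆ A` and `[A,z] ⊄ A`. Then `M` is abelian. -/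
theorem stmt19 (b : Z →ₗ[F] Z →ₗ[F] Z)
    (hZinbiel : ∀ x y z : Z, b (b x y) z = b x (b y z) + b x (b z y))
    (M A : Submodule F Z) (hMideal : IsIdeal b M)
    (z : Z) (hzspan : M ⊔ Submodule.span F {z} = ⊤)
    (hAM : A ≤ M) (hsubA : IsSubalg b A) (habA : IsAbelian b A)
    (a : Z) (ha : a ∈ A) (hMspan : A ⊔ Submodule.span F {b a z} = M)
    (hzA : ∀ x ∈ A, b z x ∈ A) (hAz : ¬ ∀ x ∈ A, b x z ∈ A) :
    IsAbelian b M := by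
  -- Step 1: every u ∈ A annihilates b a z on the left.
  have key1 : ∀ u ∈ A, b u (b a z) = 0 := by
    intro u hu
    have h := hZinbiel u a z
    rw [habA u hu a ha, habA u hu (b z a) (hzA a ha)] at h
    simpa using h.symm
  -- decomposition of elements of M
  have decomp : ∀ m ∈ M, ∃ v ∈ A, ∃ c : F, m = v + c • (b a z) := by
    intro m hm
    rw [← hMspan] at hm
    rcases Submodule.mem_sup.mp hm with ⟨v, hv, w, hw, rfl⟩
    rcases Submodule.mem_span_singleton.mp hw with ⟨c, rfl⟩
    exact ⟨v, hv, c, rfl⟩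
  -- Step 2: every u ∈ A annihilates all of M on the left.
  have key2 : ∀ u ∈ A, ∀ m ∈ M, b u m = 0 := by
    intro u hu m hm
    rcases decomp m hm with ⟨v, hv, c, rfl⟩
    rw [map_add, map_smul, habA u hu v hv, key1 u hu, smul_zero, add_zero]
  -- Step 3: b a z annihilates all of M on the left.
  have key3 : ∀ m ∈ M, b (b a z) m = 0 := by
    intro m hm
    have h := hZinbiel a z m
    rw [key2 a ha (b z m) (hMideal z m hm).1,
      key2 a ha (b m z) (hMideal z m hm).2] at h
    · simpa using h
  intro x hx y hy
  rcases decomp x hx with ⟨u, hu, c, rfl⟩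
  rw [map_add, map_smul, LinearMap.add_apply, LinearMap.smul_apply,
    key2 u hu y hy, key3 y hy, smul_zero, add_zero]
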